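/- In the three-action counter-example (Y = {y₁,y₂,y₃}, π_ref = (1/2,1/2,0), single pair y₁ ≻ y₂, β > 0), the set of policies attaining DPO loss 0 is exactly {π : π(y₁) > 0, π(y₂) = 0}, and the subset of these achievable as KL-regularized optima with respect to π_ref is exactly {π : π(y₁) = 1, π(y₂) = π(y₃) = 0} in the limit of reward gap → ∞; in particular for any policy π with π(y₃) > 0, π ∉ Π_PPO. -/

import Mathlib

/-! A PPO-form policy `π ∝ π_ref · exp (r / β)` inherits the support of `π_ref`, so it vanishes
at `y₃`, and it is a probability vector with `π(y₁) > 0`. The DPO loss `log (1 + q ^ β)` of the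
ratio `q = π(y₂) / π(y₁)` is a continuous bijection of `[0, ∞)` onto itself with continuous
inverse `t ↦ (exp t - 1) ^ β⁻¹`; hence the loss vanishes exactly when `q = 0`, and it tends to
`0` exactly when `q` does, which on the simplex `π(y₁) + π(y₂) = 1` forces `π → (1, 0, 0)`. -/

open Filter Topology

noncomputable def gibbsPolicy {ι : Type*} [Fintype ι] (πref : ι → ℝ) (β : ℝ) (r : ι → ℝ)
    (y : ι) : ℝ :=
  πref y * Real.exp (r y / β) / ∑ y', πref y' * Real.exp (r y' / β)

section Gibbs

variable {ι : Type*} [Fintype ι] {πref : ι → ℝ} (β : ℝ) (r : ι → ℝ)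

lemma gibbsPolicy_eq_zero {y : ι} (hy : πref y = 0) : gibbsPolicy πref β r y = 0 := by
  simp [gibbsPolicy, hy]

lemma gibbsPolicy_nonneg (href : ∀ y, 0 ≤ πref y) (y : ι) : 0 ≤ gibbsPolicy πref β r y :=
  div_nonneg (mul_nonneg (href y) (Real.exp_pos _).le)
    (Finset.sum_nonneg fun y' _ => mul_nonneg (href y') (Real.exp_pos _).le)

lemma partitionFunction_pos (href : ∀ y, 0 ≤ πref y) {y : ι} (hy : 0 < πref y) :
    0 < ∑ y', πref y' * Real.exp (r y' / β) :=
  Finset.sum_pos' (fun y' _ => mul_nonneg (href y') (Real.exp_pos _).le)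
    ⟨y, Finset.mem_univ _, mul_pos hy (Real.exp_pos _)⟩

lemma gibbsPolicy_pos (href : ∀ y, 0 ≤ πref y) {y : ι} (hy : 0 < πref y) :
    0 < gibbsPolicy πref β r y :=
  div_pos (mul_pos hy (Real.exp_pos _)) (partitionFunction_pos β r href hy)

lemma sum_gibbsPolicy (href : ∀ y, 0 ≤ πref y) {y : ι} (hy : 0 < πref y) :
    ∑ y', gibbsPolicy πref β r y' = 1 := by
  simp only [gibbsPolicy]
  rw [← Finset.sum_div, div_self (partitionFunction_pos β r href hy).ne']

end Gibbs

section DPOLoss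

variable {β : ℝ}

lemma exp_log_one_add_rpow_sub_one_rpow_inv (hβ : β ≠ 0) {q : ℝ} (hq : 0 ≤ q) :
    (Real.exp (Real.log (1 + q ^ β)) - 1) ^ β⁻¹ = q := by
  rw [Real.exp_log (by positivity), add_sub_cancel_left, ← Real.rpow_mul hq,
    mul_inv_cancel₀ hβ, Real.rpow_one]

lemma log_one_add_rpow_eq_zero_iff (hβ : 0 < β) {q : ℝ} (hq : 0 ≤ q) :
    Real.log (1 + q ^ β) = 0 ↔ q = 0 := by
  constructor
  · intro h
    rw [← exp_log_one_add_rpow_sub_one_rpow_inv hβ.ne' hq, h, Real.exp_zero, sub_self,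
      Real.zero_rpow (inv_ne_zero hβ.ne')]
  · rintro rfl
    rw [Real.zero_rpow hβ.ne', add_zero, Real.log_one]

lemma tendsto_zero_of_tendsto_log_one_add_rpow {α : Type*} {l : Filter α} (hβ : 0 < β)
    {q : α → ℝ} (hq : ∀ a, 0 ≤ q a) (h : Tendsto (fun a => Real.log (1 + q a ^ β)) l (𝓝 0)) :
    Tendsto q l (𝓝 0) := by
  have hinv : ContinuousAt (fun t => (Real.exp t - 1) ^ β⁻¹) 0 :=
    ((Real.continuous_exp.sub continuous_const).continuousAt).rpow_const
      (Or.inr (inv_nonneg.2 hβ.le))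
  have := hinv.tendsto.comp h
  rw [Real.exp_zero, sub_self, Real.zero_rpow (inv_ne_zero hβ.ne')] at this
  exact this.congr fun a => exp_log_one_add_rpow_sub_one_rpow_inv hβ.ne' (hq a)

lemma tendsto_zero_of_tendsto_log_one_add_div_rpow {α : Type*} {l : Filter α} (hβ : 0 < β)
    {p q : α → ℝ} (hp : ∀ a, 0 < p a) (hq : ∀ a, 0 ≤ q a) (hpq : ∀ a, p a + q a = 1)
    (h : Tendsto (fun a => Real.log (1 + (q a / p a) ^ β)) l (𝓝 0)) :
    Tendsto q l (𝓝 0) := by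
  have hratio := tendsto_zero_of_tendsto_log_one_add_rpow hβ
    (fun a => div_nonneg (hq a) (hp a).le) h
  refine squeeze_zero hq (fun a => ?_) hratio
  have hp_le_one : p a ≤ 1 := by linarith [hpq a, hq a]
  calc q a = q a / p a * p a := (div_mul_cancel₀ _ (hp a).ne').symm
    _ ≤ q a / p a := mul_le_of_le_one_right (div_nonneg (hq a) (hp a).le) hp_le_one

end DPOLoss

lemma gibbsPolicy_half_half_zero (β : ℝ) (r : Fin 3 → ℝ) :
    let π := gibbsPolicy ![1/2, 1/2, 0] β r
    0 < π 0 ∧ 0 ≤ π 1 ∧ π 0 + π 1 = 1 ∧ π 2 = 0 := by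
  have href : ∀ y, 0 ≤ (![1/2, 1/2, 0] : Fin 3 → ℝ) y := by
    intro y; fin_cases y <;> norm_num
  have hsupp : 0 < (![1/2, 1/2, 0] : Fin 3 → ℝ) 0 := by norm_num
  have h2 := gibbsPolicy_eq_zero β r (πref := ![1/2, 1/2, 0]) (y := 2) rfl
  have hsum := sum_gibbsPolicy β r href hsupp
  rw [Fin.sum_univ_three, h2, add_zero] at hsum
  exact ⟨gibbsPolicy_pos β r href hsupp, gibbsPolicy_nonneg β r href 1, hsum, h2⟩

/-- In the three-action counter-example (`π_ref = (1/2,1/2,0)`, single pair `y₁ ≻ y₂`):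
the policies attaining DPO loss `0` are exactly `{π : π(y₁) > 0 ∧ π(y₂) = 0}`;
every PPO-form policy `π(y) ∝ π_ref(y)·exp(r(y)/β)` satisfies `π(y₃) = 0` (so any policy
with `π(y₃) > 0` is not a PPO solution); and any sequence of PPO-form policies whose DPO
loss tends to `0` converges (pointwise) to `(1,0,0)`. -/
theorem stmt_14 (β : ℝ) (hβ : 0 < β)
    (πref : Fin 3 → ℝ) (hπref : πref = ![1/2, 1/2, 0])
    (L : (Fin 3 → ℝ) → EReal)
    (hL : ∀ π : Fin 3 → ℝ,
      L π = if π 0 = 0 then ⊤ else ((Real.log (1 + (π 1 / π 0) ^ β) : ℝ) : EReal))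
    (PPOform : (Fin 3 → ℝ) → Prop)
    (hPPOform : ∀ π : Fin 3 → ℝ, PPOform π ↔ ∃ r : Fin 3 → ℝ,
      ∀ y, π y = πref y * Real.exp (r y / β) /
          (∑ y', πref y' * Real.exp (r y' / β))) :
    (∀ π : Fin 3 → ℝ, (∀ y, 0 ≤ π y) → (∑ y, π y = 1) →
      (L π = 0 ↔ (0 < π 0 ∧ π 1 = 0))) ∧
    (∀ π : Fin 3 → ℝ, PPOform π → π 2 = 0) ∧
    (∀ πs : ℕ → (Fin 3 → ℝ), (∀ n, PPOform (πs n)) →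
      Filter.Tendsto (fun n => L (πs n)) Filter.atTop (nhds (0 : EReal)) →
      ∀ y, Filter.Tendsto (fun n => πs n y) Filter.atTop (nhds ((![1, 0, 0] : Fin 3 → ℝ) y))) := by
  subst hπref
  have hppo : ∀ π, PPOform π → 0 < π 0 ∧ 0 ≤ π 1 ∧ π 0 + π 1 = 1 ∧ π 2 = 0 := by
    intro π hπ
    obtain ⟨r, hr⟩ := (hPPOform π).1 hπ
    obtain rfl : π = gibbsPolicy ![1/2, 1/2, 0] β r := funext hr
    exact gibbsPolicy_half_half_zero β r
  refine ⟨?_, fun π hπ => (hppo π hπ).2.2.2, ?_⟩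
  · intro π hnn _
    rw [hL]
    rcases (hnn 0).eq_or_lt with h0 | h0
    · simp [← h0]
    · rw [if_neg h0.ne', EReal.coe_eq_zero,
        log_one_add_rpow_eq_zero_iff hβ (div_nonneg (hnn 1) h0.le), div_eq_zero_iff]
      simp [h0, h0.ne']
  · intro πs hπs hlim
    choose hp hq hpq h2 using fun n => hppo _ (hπs n)
    have h1 : Tendsto (fun n => πs n 1) atTop (𝓝 0) :=
      tendsto_zero_of_tendsto_log_one_add_div_rpow hβ hp hq hpq
        (by rw [← EReal.tendsto_coe]; simpa [hL, (hp _).ne'] using hlim)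
    intro y
    fin_cases y
    · have h0 := (tendsto_const_nhds (x := (1 : ℝ))).sub h1
      rw [sub_zero] at h0
      exact h0.congr fun n => (eq_sub_of_add_eq (hpq n)).symm
    · exact h1
    · simp [h2]
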